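/- Let K be a field, f ∈ K[x] an irreducible polynomial, and let p, q ∈ K[x] be coprime polynomials with q ≠ 0 defining the rational function φ = p/q. If for every root β of f (in an algebraic closure) the polynomial p − β·q is irreducible over K(β), and f is irreducible over K, then the numerator of f ∘ φ (i.e., q^{deg f} · f(p/q)) is irreducible over K. -/

import Mathlib

/-!
Take a root `β` of `f` and a root `α` of `g = p - β q ∈ K(β)[x]` in an algebraic closure. From
`p(α) = β q(α)` we get `F(α) = f(β) q(α)^n = 0` for `F = q^n f(p/q)`, `n = deg f`, and, since `p`
and `q` are coprime, `q(α) ≠ 0`, so `β = p(α)/q(α) ∈ K(α)`. The tower `K ⊆ K(β) ⊆ K(α)` gives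
`deg_K α = n · deg g`. On the other hand `deg F ≤ n · max(deg p, deg q)`, and
`deg g = max(deg p, deg q)` unless `β ∈ K`, in which case `n = 1` and `F` is a scalar multiple of
`p - β q`. Thus `F` is a multiple of the minimal polynomial of `α` of no larger degree; it is
nonzero because `p/q` is a root of `f` in `K(x)`, while nonconstant rational functions are
transcendental over `K`. Hence `F` is irreducible.
-/

open Polynomial IntermediateField

namespace Polynomial

section CommSemiring

variable {R : Type*} [CommSemiring R]

/-- The numerator `q ^ deg f * f (p / q)` of `f ∘ (p / q)`. -/
noncomputable def numeratorComp (f p q : R[X]) : R[X] :=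
  ∑ i ∈ Finset.range (f.natDegree + 1), C (f.coeff i) * p ^ i * q ^ (f.natDegree - i)

theorem map_numeratorComp_of_eq_mul {A : Type*} [CommSemiring A] [Algebra R A]
    (φ : R[X] →ₐ[R] A) (f : R[X]) {p q : R[X]} {β : A} (h : φ p = β * φ q) :
    φ (numeratorComp f p q) = aeval β f * φ q ^ f.natDegree := by
  rw [numeratorComp, map_sum, aeval_eq_sum_range, Finset.sum_mul]
  refine Finset.sum_congr rfl fun i hi => ?_
  obtain ⟨k, hk⟩ := Nat.exists_eq_add_of_le (Nat.lt_succ_iff.mp (Finset.mem_range.mp hi))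
  rw [hk, Nat.add_sub_cancel_left, map_mul, map_mul, map_pow, map_pow, h, ← algebraMap_eq,
    φ.commutes, Algebra.smul_def, pow_add]
  ring

theorem natDegree_numeratorComp_le (f p q : R[X]) :
    (numeratorComp f p q).natDegree ≤ f.natDegree * max p.natDegree q.natDegree := by
  refine natDegree_sum_le_of_forall_le _ _ fun i hi => ?_
  have hsum : i + (f.natDegree - i) = f.natDegree :=
    Nat.add_sub_cancel' (Nat.lt_succ_iff.mp (Finset.mem_range.mp hi))
  calc (C (f.coeff i) * p ^ i * q ^ (f.natDegree - i)).natDegree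
      ≤ i * p.natDegree + (f.natDegree - i) * q.natDegree := by
        rw [mul_assoc]
        exact (natDegree_C_mul_le _ _).trans
          (natDegree_mul_le_of_le natDegree_pow_le natDegree_pow_le)
    _ ≤ i * max p.natDegree q.natDegree + (f.natDegree - i) * max p.natDegree q.natDegree := by
        gcongr
        exacts [le_max_left _ _, le_max_right _ _]
    _ = f.natDegree * max p.natDegree q.natDegree := by rw [← add_mul, hsum]

end CommSemiring

theorem numeratorComp_of_natDegree_eq_one {R : Type*} [CommRing R] {f : R[X]}
    (hf : f.natDegree = 1) {b : R} (hb : f.IsRoot b) (p q : R[X]) :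
    numeratorComp f p q = C f.leadingCoeff * (p - C b * q) := by
  have hb : f.coeff 0 = -(f.coeff 1 * b) := by
    rw [IsRoot, eval_eq_sum_range, hf] at hb
    simp only [Finset.sum_range_succ, Finset.sum_range_zero, pow_zero, pow_one] at hb
    linear_combination hb
  rw [numeratorComp, leadingCoeff, hf]
  simp only [Finset.sum_range_succ, Finset.sum_range_zero, hb, map_neg, map_mul]
  ring

theorem natDegree_map_sub_C_mul_map_le {K L : Type*} [CommSemiring K] [CommRing L] [Algebra K L]
    (p q : K[X]) (y : L) :
    (p.map (algebraMap K L) - C y * q.map (algebraMap K L)).natDegree ≤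
      max p.natDegree q.natDegree :=
  (natDegree_sub_le _ _).trans <| max_le_max natDegree_map_le <|
    (natDegree_C_mul_le _ _).trans natDegree_map_le

section Field

variable {K : Type*} [Field K]

theorem natDegree_map_sub_C_mul_map {L : Type*} [Field L] [Algebra K L] (p q : K[X]) {y : L}
    (hy : y ∉ (algebraMap K L).range) :
    (p.map (algebraMap K L) - C y * q.map (algebraMap K L)).natDegree =
      max p.natDegree q.natDegree := by
  set g := p.map (algebraMap K L) - C y * q.map (algebraMap K L)
  have hcoeff : ∀ n, g.coeff n = algebraMap K L (p.coeff n) - y * algebraMap K L (q.coeff n) := by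
    simp [g, coeff_map]
  have hq : q.natDegree ≤ g.natDegree := by
    rcases eq_or_ne q 0 with rfl | hq0
    · simp
    refine le_natDegree_of_ne_zero fun h => hy ⟨p.coeff q.natDegree / q.leadingCoeff, ?_⟩
    rw [hcoeff, sub_eq_zero, coeff_natDegree] at h
    rw [map_div₀, h, mul_div_cancel_right₀]
    exact (map_ne_zero_iff _ (algebraMap K L).injective).mpr (leadingCoeff_ne_zero.mpr hq0)
  refine le_antisymm (natDegree_map_sub_C_mul_map_le p q y) (max_le ?_ hq)
  rcases le_or_gt p.natDegree q.natDegree with hpq | hpq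
  · exact hpq.trans hq
  refine le_natDegree_of_ne_zero ?_
  rw [hcoeff, coeff_eq_zero_of_natDegree_lt hpq, map_zero, mul_zero, sub_zero,
    map_ne_zero_iff _ (algebraMap K L).injective, ← leadingCoeff, leadingCoeff_ne_zero]
  rintro rfl
  simp at hpq

theorem numeratorComp_ne_zero {f p q : K[X]} (hf : f ≠ 0) (hpq : IsCoprime p q)
    (hdeg : 0 < max p.natDegree q.natDegree) : numeratorComp f p q ≠ 0 := by
  have hq : q ≠ 0 := by
    rintro rfl
    have := natDegree_eq_zero_of_isUnit (isCoprime_zero_right.mp hpq)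
    simp [this] at hdeg
  have hconst : ∀ c, p ≠ C c * q := by
    rintro c rfl
    have hq0 : q.natDegree = 0 :=
      natDegree_eq_zero_of_isUnit (hpq.isUnit_of_dvd' (dvd_mul_left q _) dvd_rfl)
    have hp0 : (C c * q).natDegree = 0 := Nat.le_zero.mp ((natDegree_C_mul_le c q).trans hq0.le)
    simp [hq0, hp0] at hdeg
  intro hF
  let φ := IsScalarTower.toAlgHom K K[X] (RatFunc K)
  have hφ : Function.Injective φ := IsFractionRing.injective K[X] (RatFunc K)
  have hφq : φ q ≠ 0 := (map_ne_zero_iff φ hφ).mpr hq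
  have hft : aeval (φ p / φ q) f = 0 := by
    have := map_numeratorComp_of_eq_mul φ f (div_mul_cancel₀ (φ p) hφq).symm
    rw [hF, map_zero, eq_comm, mul_eq_zero] at this
    exact this.resolve_right (pow_ne_zero _ hφq)
  obtain ⟨c, hc⟩ : ∃ c, φ p / φ q = RatFunc.C c := by
    by_contra h
    exact RatFunc.transcendental_of_ne_C _ h ⟨f, hf, hft⟩
  refine hconst c (hφ ?_)
  rw [div_eq_iff hφq] at hc
  rw [hc, map_mul]
  exact congrArg (· * φ q) (RatFunc.algebraMap_C c).symm

theorem natDegree_numeratorComp_le_mul_natDegree {L : Type*} [Field L] [Algebra K L] {f : K[X]}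
    (hf : Irreducible f) (p q : K[X]) {y : L} (hy : aeval y f = 0) :
    (numeratorComp f p q).natDegree ≤
      f.natDegree * (p.map (algebraMap K L) - C y * q.map (algebraMap K L)).natDegree := by
  by_cases hyK : y ∈ (algebraMap K L).range
  · obtain ⟨b, rfl⟩ := hyK
    have hb : f.IsRoot b := by
      rwa [aeval_algebraMap_apply, map_eq_zero_iff _ (algebraMap K L).injective,
        coe_aeval_eq_eval] at hy
    have hf1 : f.natDegree = 1 :=
      natDegree_eq_of_degree_eq_some (degree_eq_one_of_irreducible_of_root hf hb)
    rw [numeratorComp_of_natDegree_eq_one hf1 hb, hf1, one_mul, ← map_C, ← Polynomial.map_mul,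
      ← Polynomial.map_sub, natDegree_map]
    exact natDegree_C_mul_le _ _
  · rw [natDegree_map_sub_C_mul_map p q hyK]
    exact natDegree_numeratorComp_le f p q

end Field

end Polynomial

section Minpoly

variable {K E : Type*} [Field K] [Field E] [Algebra K E]

theorem mem_adjoin_simple_of_aeval_eq_mul {p q : K[X]} (hpq : IsCoprime p q) {α β : E}
    (h : aeval α p = β * aeval α q) : β ∈ K⟮α⟯ := by
  have hq : aeval α q ≠ 0 := by
    intro hq
    obtain ⟨u, v, huv⟩ := hpq
    simpa [h, hq] using congrArg (aeval α) huv
  have hmem : ∀ r : K[X], aeval α r ∈ K⟮α⟯ := fun r =>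
    algebra_adjoin_le_adjoin K {α} (aeval_mem_adjoin_singleton K α)
  rw [← mul_div_cancel_right₀ β hq, ← h]
  exact div_mem (hmem p) (hmem q)

theorem natDegree_minpoly_eq_mul_of_mem_adjoin {α β : E} (hα : IsIntegral K α) (hβ : β ∈ K⟮α⟯) :
    (minpoly K α).natDegree = (minpoly K β).natDegree * (minpoly K⟮β⟯ α).natDegree := by
  have := adjoin.finiteDimensional hα
  have hβint : IsIntegral K β :=
    isIntegral_iff.mp (IsIntegral.of_finite K (⟨β, hβ⟩ : K⟮α⟯))
  have hαβ : K⟮β⟯⟮α⟯.restrictScalars K = K⟮α⟯ := by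
    rw [adjoin_simple_adjoin_simple]
    refine le_antisymm ?_ (adjoin.mono _ _ _ (Set.subset_insert _ _))
    rw [adjoin_le_iff, Set.insert_subset_iff, Set.singleton_subset_iff]
    exact ⟨hβ, mem_adjoin_simple_self K α⟩
  rw [← adjoin.finrank hα, ← adjoin.finrank hβint, ← adjoin.finrank hα.tower_top,
    Module.finrank_mul_finrank, ← hαβ]
  rfl

theorem natDegree_minpoly_of_irreducible {f : K[X]} (hf : Irreducible f) {x : E}
    (hx : aeval x f = 0) : (minpoly K x).natDegree = f.natDegree := by
  rw [← minpoly.eq_of_irreducible hf hx,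
    natDegree_mul_C (inv_ne_zero (leadingCoeff_ne_zero.mpr hf.ne_zero))]

theorem irreducible_of_aeval_eq_zero_of_natDegree_le {x : E} (hx : IsIntegral K x) {F : K[X]}
    (hF : F ≠ 0) (hFx : aeval x F = 0) (hdeg : F.natDegree ≤ (minpoly K x).natDegree) :
    Irreducible F := by
  obtain ⟨c, rfl⟩ := minpoly.dvd K x hFx
  have hc : c ≠ 0 := right_ne_zero_of_mul hF
  rw [natDegree_mul (minpoly.ne_zero hx) hc] at hdeg
  obtain ⟨u, rfl⟩ : ∃ u, C u = c := natDegree_eq_zero.mp (by omega)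
  have hu : IsUnit (C u) := isUnit_C.mpr (isUnit_iff_ne_zero.mpr (by simpa using hc))
  exact (irreducible_mul_isUnit hu).mpr (minpoly.irreducible hx)

end Minpoly

theorem capelli_rational_general
    (K : Type*) [Field K] (f p q : Polynomial K)
    (hf : Irreducible f) (hcop : IsCoprime p q)
    (hroots : ∀ β : AlgebraicClosure K, aeval β f = 0 →
      Irreducible (p.map (algebraMap K K⟮β⟯) -
        C (AdjoinSimple.gen K β) * q.map (algebraMap K K⟮β⟯))) :
    Irreducible (∑ i ∈ Finset.range (f.natDegree + 1),
      C (f.coeff i) * p ^ i * q ^ (f.natDegree - i)) := by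
  change Irreducible (numeratorComp f p q)
  obtain ⟨β, hβ⟩ := IsAlgClosed.exists_aeval_eq_zero (AlgebraicClosure K) f
    (degree_pos_of_irreducible hf).ne'
  have hg := hroots β hβ
  obtain ⟨α, hα⟩ := IsAlgClosed.exists_aeval_eq_zero (AlgebraicClosure K) _
    (degree_pos_of_irreducible hg).ne'
  have hαβ : aeval α p = β * aeval α q := by
    simpa [aeval_map_algebraMap, sub_eq_zero] using hα
  have hβgen : aeval (AdjoinSimple.gen K β) f = 0 :=
    Subtype.ext (by rw [AdjoinSimple.coe_aeval_gen_apply, hβ]; rfl)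
  have hαint : IsIntegral K α := Algebra.IsIntegral.isIntegral α
  refine irreducible_of_aeval_eq_zero_of_natDegree_le hαint ?_ ?_ ?_
  · exact numeratorComp_ne_zero hf.ne_zero hcop
      (hg.natDegree_pos.trans_le (natDegree_map_sub_C_mul_map_le p q _))
  · rw [map_numeratorComp_of_eq_mul (aeval α) f hαβ, hβ, zero_mul]
  · rw [natDegree_minpoly_eq_mul_of_mem_adjoin hαint
        (mem_adjoin_simple_of_aeval_eq_mul hcop hαβ), natDegree_minpoly_of_irreducible hf hβ,
      natDegree_minpoly_of_irreducible hg hα]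
    exact natDegree_numeratorComp_le_mul_natDegree hf p q hβgen

/-- Capelli's lemma for rational functions. Let `K` be a field,
`f ∈ K[x]` irreducible, and `p, q ∈ K[x]` coprime with `q ≠ 0`, defining `φ = p/q`.
If for every root `β` of `f` in an algebraic closure the polynomial `p − β·q` is
irreducible over `K(β)`, then the numerator `q^{deg f}·f(p/q)` of `f ∘ φ`, namely
`∑ i, (coeff f i)·p^i·q^{deg f − i}`, is irreducible over `K`. -/
theorem capelli_rational
    (K : Type*) [Field K] (f p q : Polynomial K)
    (hf : Irreducible f) (hq : q ≠ 0) (hcop : IsCoprime p q)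
    (hroots : ∀ β : AlgebraicClosure K, aeval β f = 0 →
      Irreducible (p.map (algebraMap K K⟮β⟯) -
        C (AdjoinSimple.gen K β) * q.map (algebraMap K K⟮β⟯))) :
    Irreducible (∑ i ∈ Finset.range (f.natDegree + 1),
      C (f.coeff i) * p ^ i * q ^ (f.natDegree - i)) :=
  capelli_rational_general K f p q hf hcop hroots
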